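/- Fix positive integers N, r, m, α with 2 ≤ α ≤ r ≤ N, mα ≤ N, and μ > 0. If α·C(mα−1, α−1) ≤ ∏_{i=1}^{α−1} (N−i)/(r−i), then the α quasi-uniform service rate under fixed-size access with scaled exponential service satisfies μ_s(α) = (μα/C(N,r))·∑_{φ=α}^{min(r,mα)} C(mα,φ)C(N−mα,r−φ)/(H_φ−H_{φ−α}) < μmr/N = μ_s(1). -/

import Mathlib

/-!
Since `α ≥ 2`, the harmonic gap `H φ - H (φ - α)` is a sum of `α` reciprocals of which only the
last equals `1/φ`, so it strictly exceeds `α/φ`. Hence each summand is at most `φ/α` times its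
weight `C(mα, φ) C(N - mα, r - φ)`, strictly for the top index `φ = min r (mα)`, whose weight is
positive. Absorbing the factor `φ` into the binomial gives `mα C(mα - 1, φ - 1)`, and
`C(mα - 1, φ - 1) ≤ C(mα - 1, α - 1) C(mα - α, φ - α)` together with Vandermonde bounds the
weighted sum by `mα C(mα - 1, α - 1) C(N - α, r - α)`. As the product in (13) telescopes to
`C(N - 1, r - 1) / C(N - α, r - α)`, condition (13) says `α C(mα - 1, α - 1) C(N - α, r - α) ≤
C(N - 1, r - 1)`, and finally `C(N - 1, r - 1) / C(N, r) = r / N`.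
-/

open Finset

noncomputable def H (n : ℕ) : ℝ := ∑ i ∈ Finset.Icc 1 n, (1 : ℝ) / i

lemma H_sub_H_eq_sum_Ioc {a b : ℕ} (hab : a ≤ b) : H b - H a = ∑ i ∈ Ioc a b, (1 : ℝ) / i := by
  have hIcc (n : ℕ) : Icc 1 n = Ioc 0 n := Icc_add_one_left_eq_Ioc 0 n
  rw [H, H, hIcc, hIcc, sub_eq_iff_eq_add', sum_Ioc_consecutive _ (Nat.zero_le a) hab]

lemma div_lt_H_sub_H_sub {α φ : ℕ} (hα : 2 ≤ α) (hαφ : α ≤ φ) :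
    (α : ℝ) / φ < H φ - H (φ - α) := by
  have hφ : (0 : ℝ) < φ := by exact_mod_cast (by omega : 0 < φ)
  rw [H_sub_H_eq_sum_Ioc (Nat.sub_le φ α)]
  have hterm : ∀ i ∈ Ioc (φ - α) φ, (1 : ℝ) / φ ≤ 1 / i := fun i hi => by
    rw [mem_Ioc] at hi
    exact one_div_le_one_div_of_le (by exact_mod_cast (by omega : 0 < i)) (by exact_mod_cast hi.2)
  have hfirst : (1 : ℝ) / φ < 1 / ((φ - α + 1 : ℕ) : ℝ) :=
    one_div_lt_one_div_of_lt (by positivity) (by exact_mod_cast (by omega : φ - α + 1 < φ))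
  calc (α : ℝ) / φ = ∑ _i ∈ Ioc (φ - α) φ, (1 : ℝ) / φ := by
        rw [sum_const, Nat.card_Ioc, Nat.sub_sub_self hαφ, nsmul_eq_mul, mul_one_div]
    _ < ∑ i ∈ Ioc (φ - α) φ, (1 : ℝ) / i :=
        sum_lt_sum hterm ⟨φ - α + 1, by rw [mem_Ioc]; omega, hfirst⟩

lemma div_H_sub_H_sub_lt {α φ : ℕ} (hα : 2 ≤ α) (hαφ : α ≤ φ) {w : ℝ} (hw : 0 < w) :
    w / (H φ - H (φ - α)) < φ * w / α := by
  have hφ : (0 : ℝ) < φ := by exact_mod_cast (by omega : 0 < φ)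
  have hα0 : (0 : ℝ) < α := by exact_mod_cast (by omega : 0 < α)
  calc w / (H φ - H (φ - α)) < w / (α / φ) :=
        div_lt_div_of_pos_left hw (by positivity) (div_lt_H_sub_H_sub hα hαφ)
    _ = φ * w / α := by field_simp

lemma div_H_sub_H_sub_le {α φ : ℕ} (hα : 2 ≤ α) (hαφ : α ≤ φ) {w : ℝ} (hw : 0 ≤ w) :
    w / (H φ - H (φ - α)) ≤ φ * w / α := by
  rcases hw.eq_or_lt with rfl | hw
  · simp
  · exact (div_H_sub_H_sub_lt hα hαφ hw).le

lemma sum_div_H_sub_H_sub_lt {α K : ℕ} (hα : 2 ≤ α) (hαK : α ≤ K) (w : ℕ → ℕ) (hw : 0 < w K) :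
    ∑ φ ∈ Icc α K, (w φ : ℝ) / (H φ - H (φ - α)) < (∑ φ ∈ Icc α K, φ * w φ : ℕ) / α := by
  rw [Nat.cast_sum, sum_div]
  refine sum_lt_sum (fun φ hφ => ?_) ⟨K, by simp [hαK], ?_⟩ <;> rw [Nat.cast_mul]
  · exact div_H_sub_H_sub_le hα (mem_Icc.mp hφ).1 (by positivity)
  · exact div_H_sub_H_sub_lt hα hαK (by exact_mod_cast hw)

namespace Nat

lemma mul_choose_eq_mul_choose_sub_one {n k : ℕ} (hk : 1 ≤ k) :
    k * n.choose k = n * (n - 1).choose (k - 1) := by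
  obtain ⟨k, rfl⟩ : ∃ k', k = k' + 1 := ⟨k - 1, by omega⟩
  rcases n with _ | n
  · simp
  · simpa [mul_comm] using (add_one_mul_choose_eq n k).symm

lemma choose_le_choose_mul_choose (n : ℕ) {j k : ℕ} (hkj : k ≤ j) :
    n.choose j ≤ n.choose k * (n - k).choose (j - k) := by
  calc n.choose j ≤ n.choose j * j.choose k := Nat.le_mul_of_pos_right _ (choose_pos hkj)
    _ = _ := choose_mul hkj

lemma sum_Icc_choose_sub_mul_choose_sub (a b : ℕ) {α r : ℕ} (hαr : α ≤ r) :
    ∑ j ∈ Icc α r, a.choose (j - α) * b.choose (r - j) = (a + b).choose (r - α) := by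
  rw [← Ico_add_one_right_eq_Icc, sum_Ico_eq_sum_range, add_choose_eq,
    Nat.sum_antidiagonal_eq_sum_range_succ_mk, show r + 1 - α = r - α + 1 by omega]
  refine sum_congr rfl fun t ht => ?_
  rw [mem_range] at ht
  congr 2 <;> omega

lemma sum_Icc_mul_choose_mul_choose_le (M b : ℕ) {α r : ℕ} (hα : 1 ≤ α) (hαr : α ≤ r) :
    ∑ j ∈ Icc α r, j * (M.choose j * b.choose (r - j)) ≤
      M * ((M - 1).choose (α - 1) * (M - α + b).choose (r - α)) := by
  have hterm : ∀ j ∈ Icc α r, j * (M.choose j * b.choose (r - j)) ≤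
      M * (M - 1).choose (α - 1) * ((M - α).choose (j - α) * b.choose (r - j)) := by
    intro j hj
    rw [mem_Icc] at hj
    have hsplit := choose_le_choose_mul_choose (M - 1) (by omega : α - 1 ≤ j - 1)
    rw [show M - 1 - (α - 1) = M - α by omega, show j - 1 - (α - 1) = j - α by omega] at hsplit
    calc j * (M.choose j * b.choose (r - j))
        = M * (M - 1).choose (j - 1) * b.choose (r - j) := by
          rw [← mul_assoc, mul_choose_eq_mul_choose_sub_one (by omega)]
      _ ≤ M * ((M - 1).choose (α - 1) * (M - α).choose (j - α)) * b.choose (r - j) := by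
          gcongr
      _ = _ := by ring
  calc _ ≤ ∑ j ∈ Icc α r,
        M * (M - 1).choose (α - 1) * ((M - α).choose (j - α) * b.choose (r - j)) :=
        sum_le_sum hterm
    _ = _ := by rw [← mul_sum, sum_Icc_choose_sub_mul_choose_sub _ _ hαr, mul_assoc]

end Nat

lemma prod_Icc_div_mul_choose {N r a : ℕ} (ha : 1 ≤ a) (har : a ≤ r) (hrN : r ≤ N) :
    (∏ i ∈ Icc 1 (a - 1), ((N : ℝ) - i) / ((r : ℝ) - i)) * ((N - a).choose (r - a) : ℝ) =
      (N - 1).choose (r - 1) := by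
  induction a, ha using Nat.le_induction with
  | base => simp
  | succ a ha ih =>
    have hra : (0 : ℝ) < (r : ℝ) - a := by
      rw [sub_pos]; exact_mod_cast (by omega : a < r)
    have hstep : ((N : ℝ) - a) * ((N - (a + 1)).choose (r - (a + 1)) : ℝ) =
        ((r : ℝ) - a) * ((N - a).choose (r - a) : ℝ) := by
      have h := Nat.add_one_mul_choose_eq (N - (a + 1)) (r - (a + 1))
      rw [show N - (a + 1) + 1 = N - a by omega, show r - (a + 1) + 1 = r - a by omega] at h
      rw [← Nat.cast_sub (by omega), ← Nat.cast_sub (by omega)]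
      exact_mod_cast h.trans (Nat.mul_comm _ _)
    rw [Nat.add_sub_cancel, ← Nat.sub_add_cancel ha, prod_Icc_succ_top (by omega),
      Nat.sub_add_cancel ha, mul_assoc, ← ih (by omega), div_mul_eq_mul_div, hstep,
      mul_div_cancel_left₀ _ hra.ne']

theorem stmt8 (N r m α : ℕ) (hm : 0 < m) (hα : 2 ≤ α) (hαr : α ≤ r) (hrN : r ≤ N)
    (hmα : m * α ≤ N) (μ : ℝ) (hμ : 0 < μ)
    (hcond : (α : ℝ) * ((m * α - 1).choose (α - 1)) ≤
      ∏ i ∈ Finset.Icc 1 (α - 1), ((N : ℝ) - i) / ((r : ℝ) - i)) :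
    (μ * α / (N.choose r)) *
      ∑ φ ∈ Finset.Icc α (min r (m * α)),
        ((m * α).choose φ) * ((N - m * α).choose (r - φ)) / (H φ - H (φ - α))
      < μ * m * r / N := by
  generalize hM : m * α = M at hcond hmα ⊢
  have hαK : α ≤ min r M := le_min hαr (hM ▸ Nat.le_mul_of_pos_left α hm)
  have hCpos : (0 : ℝ) < N.choose r := by exact_mod_cast Nat.choose_pos hrN
  have hsum := sum_div_H_sub_H_sub_lt hα hαK (fun φ => M.choose φ * (N - M).choose (r - φ))
    (Nat.mul_pos (Nat.choose_pos (min_le_right r M)) (Nat.choose_pos (by omega)))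
  have hweighted : ∑ φ ∈ Icc α (min r M), φ * (M.choose φ * (N - M).choose (r - φ)) ≤
      M * ((M - 1).choose (α - 1) * (N - α).choose (r - α)) := by
    rw [← show M - α + (N - M) = N - α by omega]
    exact (sum_le_sum_of_subset (Icc_subset_Icc_right (min_le_left _ _))).trans
      (Nat.sum_Icc_mul_choose_mul_choose_le M (N - M) (by omega) hαr)
  have hcond' : (α : ℝ) * (M - 1).choose (α - 1) * (N - α).choose (r - α) ≤
      (N - 1).choose (r - 1) := by
    rw [← prod_Icc_div_mul_choose (by omega) hαr hrN]
    exact mul_le_mul_of_nonneg_right hcond (by positivity)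
  have hpascal : (r : ℝ) * N.choose r = N * (N - 1).choose (r - 1) := by
    exact_mod_cast Nat.mul_choose_eq_mul_choose_sub_one (by omega)
  calc _ < μ * α / N.choose r *
        (((∑ φ ∈ Icc α (min r M), φ * (M.choose φ * (N - M).choose (r - φ)) : ℕ) : ℝ) / α) := by
        gcongr
        push_cast at hsum ⊢
        exact hsum
    _ = μ / N.choose r *
        ((∑ φ ∈ Icc α (min r M), φ * (M.choose φ * (N - M).choose (r - φ)) : ℕ) : ℝ) := by
        field_simp
    _ ≤ μ / N.choose r * ((M * ((M - 1).choose (α - 1) * (N - α).choose (r - α)) : ℕ) : ℝ) := by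
        gcongr
    _ = μ * m / N.choose r * ((α : ℝ) * (M - 1).choose (α - 1) * (N - α).choose (r - α)) := by
        push_cast [← hM]
        ring
    _ ≤ μ * m / N.choose r * (N - 1).choose (r - 1) := by gcongr
    _ = μ * m * r / N := by
        have hN : (N : ℝ) ≠ 0 := by exact_mod_cast (by omega : N ≠ 0)
        rw [div_mul_eq_mul_div, div_eq_div_iff hCpos.ne' hN]
        linear_combination -μ * m * hpascal
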